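/- arXiv:2508.07207 — 2 statements merged into one kernel-verified Lean document; each statement's English description precedes it below -/
import Mathlib

section
/- If a set S ⊆ ℤ has periods p₁ and p₂ (i.e., there exists x₀ such that for all x with |x| ≥ x₀, x + pᵢ ∈ S ↔ x ∈ S), then gcd(p₁, p₂) is also a period of S. -/
/-!
"For all `x` with `|x| ≥ x₀`, for some `x₀`" means "for all but finitely many `x`". Read this
way, the integers `d` with `x + d ∈ S ↔ x ∈ S` for almost all `x` form an additive subgroup of
`ℤ`: translation is injective, so `x + d + e ∈ S ↔ x + d ∈ S ↔ x ∈ S` for almost all `x`.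
This subgroup contains `p₁` and `p₂`, hence `gcd p₁ p₂ = p₁ a + p₂ b` (Bézout).
-/
/-- `p` is a period of `S ⊆ ℤ`: there is a threshold `x₀` such that for all `x`
with `|x| ≥ x₀`, `x + p ∈ S ↔ x ∈ S`. -/
def IsPeriod (S : Set ℤ) (p : ℕ) : Prop :=
  ∃ x₀ : ℕ, ∀ x : ℤ, (x₀ : ℤ) ≤ |x| → ((x + p ∈ S) ↔ x ∈ S)

open Filter

theorem Int.eventually_cofinite_iff_exists_le_abs {P : ℤ → Prop} :
    (∀ᶠ x in cofinite, P x) ↔ ∃ x₀ : ℕ, ∀ x : ℤ, (x₀ : ℤ) ≤ |x| → P x := by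
  rw [Int.cofinite_eq, ← comap_abs_atTop, eventually_comap, eventually_atTop]
  constructor
  · rintro ⟨N, hN⟩
    exact ⟨N.toNat, fun x hx => hN |x| (le_trans (Int.self_le_toNat N) hx) x rfl⟩
  · rintro ⟨x₀, hx₀⟩
    exact ⟨x₀, fun _ hb x hx => hx₀ x (hx ▸ hb)⟩

def eventualPeriods (S : Set ℤ) : AddSubgroup ℤ where
  carrier := {d | ∀ᶠ x in cofinite, x + d ∈ S ↔ x ∈ S}
  zero_mem' := by simp
  add_mem' {d e} hd he := by
    filter_upwards [hd, (add_left_injective d).tendsto_cofinite.eventually he] with x hxd hxe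
    rw [← add_assoc]
    exact hxe.trans hxd
  neg_mem' {d} hd := by
    filter_upwards [(add_left_injective (-d)).tendsto_cofinite.eventually hd] with x hx
    simpa using hx.symm

theorem isPeriod_iff_mem_eventualPeriods {S : Set ℤ} {p : ℕ} :
    IsPeriod S p ↔ (p : ℤ) ∈ eventualPeriods S :=
  Int.eventually_cofinite_iff_exists_le_abs.symm

theorem gcd_is_period (S : Set ℤ) (p₁ p₂ : ℕ)
    (h₁ : IsPeriod S p₁) (h₂ : IsPeriod S p₂) :
    IsPeriod S (Nat.gcd p₁ p₂) := by
  rw [isPeriod_iff_mem_eventualPeriods] at *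
  rw [Nat.gcd_eq_gcd_ab, mul_comm (p₁ : ℤ), mul_comm (p₂ : ℤ)]
  exact add_mem (zsmul_mem h₁ _) (zsmul_mem h₂ _)
end

section
/- Given the projection of a solution set of a system of linear Diophantine equations: if the set P = {x₁ : ∃x₂,…,xₖ ∈ ℤ, A(x₁,…,xₖ) = b} ⊆ ℤ is infinite, then P contains a negative number. -/
/-!
Two distinct points `x ≠ y` of the projection come from solutions `u`, `v` of `A u = b`; then
`v - u` solves the homogeneous system, so the whole line `u + t (v - u)` consists of solutions.
Its first coordinates `x + t (y - x)` form an arithmetic progression with nonzero step, which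
is unbounded below.
-/

namespace Matrix

variable {R : Type*} [CommRing R]

theorem mulVec_add_smul_sub_eq {m n : Type*} [Fintype n] {A : Matrix m n R}
    {b : m → R} {u v : n → R} (hu : A *ᵥ u = b) (hv : A *ᵥ v = b) (t : R) :
    A *ᵥ (u + t • (v - u)) = b := by
  rw [mulVec_add, mulVec_smul, mulVec_sub, hu, hv, sub_self, smul_zero, add_zero]

def firstCoordSolutions {l k : ℕ} (A : Matrix (Fin l) (Fin (k + 1)) R) (b : Fin l → R) :
    Set R :=
  {x | ∃ z : Fin k → R, A *ᵥ Fin.cons x z = b}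

theorem add_mul_sub_mem_firstCoordSolutions {l k : ℕ} {A : Matrix (Fin l) (Fin (k + 1)) R}
    {b : Fin l → R} {x y : R} (hx : x ∈ A.firstCoordSolutions b) (hy : y ∈ A.firstCoordSolutions b)
    (t : R) : x + t * (y - x) ∈ A.firstCoordSolutions b := by
  obtain ⟨z, hz⟩ := hx
  obtain ⟨w, hw⟩ := hy
  refine ⟨z + t • (w - z), ?_⟩
  have hline : (Fin.cons (x + t * (y - x)) (z + t • (w - z)) : Fin (k + 1) → R) =
      Fin.cons x z + t • (Fin.cons y w - Fin.cons x z) := by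
    change vecCons _ _ = vecCons x z + t • (vecCons y w - vecCons x z)
    simp only [cons_sub_cons, smul_cons, cons_add_cons, smul_eq_mul]
  rw [hline]
  exact mulVec_add_smul_sub_eq hz hw t

end Matrix

theorem Int.exists_add_mul_neg (x : ℤ) {d : ℤ} (hd : d ≠ 0) : ∃ n : ℤ, x + n * d < 0 := by
  refine ⟨-(|x| + 1) * d.sign, ?_⟩
  have hstep : -(|x| + 1) * d.sign * d = -(|x| + 1) * |d| := by
    rw [mul_assoc, Int.sign_mul_self, Int.natCast_natAbs]
  rw [hstep]
  nlinarith [Int.one_le_abs hd, le_abs_self x, abs_nonneg x]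

theorem diophProj_infinite_contains_negative (l k : ℕ)
    (A : Matrix (Fin l) (Fin (k + 1)) ℤ) (b : Fin l → ℤ)
    (hInf : {x : ℤ | ∃ z : Fin k → ℤ, A.mulVec (Fin.cons x z) = b}.Infinite) :
    ∃ x ∈ {x : ℤ | ∃ z : Fin k → ℤ, A.mulVec (Fin.cons x z) = b}, x < 0 := by
  change (A.firstCoordSolutions b).Infinite at hInf
  obtain ⟨x, hx, y, hy, hxy⟩ := hInf.nontrivial
  obtain ⟨n, hn⟩ := Int.exists_add_mul_neg x (sub_ne_zero.mpr hxy.symm)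
  exact ⟨_, Matrix.add_mul_sub_mem_firstCoordSolutions hx hy n, hn⟩
end
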